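/- Let E < E₀. For each ρ ∈ 𝓜 there exists a sequence {ρⁿ} ⊂ 𝓜 converging to ρ in 𝓜 such that each ρⁿ is twice continuously differentiable on [−1,1], satisfies ρⁿ(−1) = ρ₋, ρⁿ(1) = ρ₊ and 0 < ρⁿ(u) < 1 for all u, and S_E(ρⁿ) → S_E(ρ). -/

import Mathlib

open Real MeasureTheory Set Filter Topology Function

noncomputable section

/-- Mobility `χ(a) = a(1−a)`. -/
def chi (a : ℝ) : ℝ := a * (1 - a)

/-- The set `𝓜`: measurable density profiles on `[−1,1]` with values in `[0,1]`. -/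
def memM (ρ : ℝ → ℝ) : Prop :=
  Measurable ρ ∧ ∀ u ∈ Set.Icc (-1:ℝ) 1, ρ u ∈ Set.Icc (0:ℝ) 1

/-- Convergence in `𝓜`: weak convergence against continuous test functions. -/
def convM (ρn : ℕ → ℝ → ℝ) (ρ : ℝ → ℝ) : Prop :=
  ∀ G : ℝ → ℝ, ContinuousOn G (Set.Icc (-1:ℝ) 1) →
    Filter.Tendsto (fun n => ∫ u in (-1:ℝ)..1, ρn n u * G u) Filter.atTop
      (nhds (∫ u in (-1:ℝ)..1, ρ u * G u))

/-- `φ ∈ 𝓕_E`, with explicit derivative function `d`: `φ` is `C¹` on `[−1,1]` with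
Lipschitz derivative `d`, `φ(−1) = φ₋`, `φ(1) = φ₊`, and `d > max 0 E` on `[−1,1]`. -/
def memF (φm φp E : ℝ) (φ d : ℝ → ℝ) : Prop :=
  (∀ u ∈ Set.Icc (-1:ℝ) 1, HasDerivWithinAt φ (d u) (Set.Icc (-1:ℝ) 1) u) ∧
  (∃ L : NNReal, LipschitzOnWith L d (Set.Icc (-1:ℝ) 1)) ∧
  φ (-1) = φm ∧ φ 1 = φp ∧
  (∀ u ∈ Set.Icc (-1:ℝ) 1, max 0 E < d u)

/-- The functional `𝓖_E(ρ,φ)` (with `d = φ'`), including the `E = 0` case.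
Recall the convention `0 log 0 = 0` (in Lean `Real.log 0 = 0`). -/
def GEint (E A : ℝ) (ρ φ d : ℝ → ℝ) : ℝ :=
  ∫ u in (-1:ℝ)..1,
    (ρ u * Real.log (ρ u) + (1 - ρ u) * Real.log (1 - ρ u)
      + (1 - ρ u) * φ u - Real.log (1 + Real.exp (φ u))
      + (if E = 0 then Real.log (d u) + 1
         else E⁻¹ * (d u * Real.log (d u) - (d u - E) * Real.log (d u - E)))
      - A)

/-- `S_E(ρ) = sup_{φ ∈ 𝓕_E} 𝓖_E(ρ,φ)`. -/
def SE (φm φp E A : ℝ) (ρ : ℝ → ℝ) : ℝ :=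
  sSup { x | ∃ φ d : ℝ → ℝ, memF φm φp E φ d ∧ x = GEint E A ρ φ d }

/-!
Write `𝓖_E(ρ,φ)` as `∫ (−H(ρ) + (1−ρ)φ)` plus a term independent of `ρ`, where `H` is the binary
entropy. Every `φ ∈ 𝓕_E` increases from `φ₋` to `φ₊`, so `|φ| ≤ M := max |φ₋| |φ₊|` uniformly in
`φ`, and therefore `|S_E(ρ₁) − S_E(ρ₂)| ≤ ∫ |H(ρ₁) − H(ρ₂)| + M |ρ₁ − ρ₂|`; the suprema are finite
because `E < E₀` puts the affine profile into `𝓕_E` and `𝓖_E(ρ,φ) ≤ 2(M + |E| − A) + φ₊ − φ₋`.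
By dominated convergence, both `S_E` and convergence in `𝓜` then pass to the limit along profiles
converging a.e. on `[−1,1]`.

Such profiles come from mollifying `ρ` at scale `δₙ = 1/(n+2)` (Lebesgue differentiation gives
a.e. convergence), squeezing the result into `(0,1)` by the factor `1 − δₙ`, and gluing it to the
linear profile from `ρ₋` to `ρ₊` by a smooth cutoff that equals `1` on `[−1 + δₙ, 1 − δₙ]` and
vanishes at `±1`.
-/

open scoped Convolution ContDiff Interval

section Approximation

def approxScale (n : ℕ) : ℝ := ((n : ℝ) + 2)⁻¹

lemma approxScale_pos (n : ℕ) : 0 < approxScale n := by unfold approxScale; positivity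

lemma approxScale_le_half (n : ℕ) : approxScale n ≤ 1 / 2 := by
  rw [approxScale, inv_le_comm₀ (by positivity) (by norm_num)]
  norm_num

lemma tendsto_approxScale : Tendsto approxScale atTop (𝓝 0) := by
  unfold approxScale
  simpa [add_assoc, one_add_one_eq_two] using
    (tendsto_add_atTop_iff_nat 2).2 (tendsto_inv_atTop_nhds_zero_nat (𝕜 := ℝ))

def mollifier (n : ℕ) : ContDiffBump (0 : ℝ) :=
  ⟨approxScale n, 2 * approxScale n, approxScale_pos n, by linarith [approxScale_pos n]⟩

def cutoff (n : ℕ) : ContDiffBump (0 : ℝ) :=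
  ⟨1 - approxScale n, 1, by linarith [approxScale_le_half n], by linarith [approxScale_pos n]⟩

def mollify (n : ℕ) (g : ℝ → ℝ) : ℝ → ℝ :=
  (mollifier n).normed volume ⋆[ContinuousLinearMap.lsmul ℝ ℝ, volume] g

variable {g : ℝ → ℝ}

lemma contDiff_mollify (hg : LocallyIntegrable g) (n : ℕ) : ContDiff ℝ ∞ (mollify n g) :=
  (mollifier n).hasCompactSupport_normed.contDiff_convolution_left _
    (mollifier n).contDiff_normed hg

lemma ae_tendsto_mollify (hg : LocallyIntegrable g) :
    ∀ᵐ x, Tendsto (fun n => mollify n g x) atTop (𝓝 (g x)) := by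
  refine ContDiffBump.ae_convolution_tendsto_right_of_locallyIntegrable (K := 2) ?_
    (Eventually.of_forall fun n => le_rfl) hg
  simpa [mollifier] using tendsto_approxScale.const_mul 2

lemma mollify_mem_Icc {a b : ℝ} (hg : Measurable g) (hab : ∀ x, g x ∈ Icc a b) (n : ℕ)
    (x : ℝ) : mollify n g x ∈ Icc a b := by
  set f := (mollifier n).normed volume
  have hfc : ∀ c, Integrable (fun t => f t * c) := fun c =>
    (mollifier n).integrable_normed.mul_const c
  have hfg : Integrable (fun t => f t * g (x - t)) :=
    (mollifier n).integrable_normed.mul_bdd (c := |a| + |b|)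
      (hg.comp (measurable_const.sub measurable_id)).aestronglyMeasurable
      (Eventually.of_forall fun t => by
        obtain ⟨h1, h2⟩ := hab (x - t)
        rw [Real.norm_eq_abs, abs_le]
        constructor <;> linarith [neg_abs_le a, le_abs_self b, abs_nonneg a, abs_nonneg b])
  have hconst : ∀ c, ∫ t, f t * c = c := fun c => by
    rw [integral_mul_const, (mollifier n).integral_normed, one_mul]
  simp only [mollify, convolution_def, ContinuousLinearMap.lsmul_apply, smul_eq_mul]
  constructor
  · calc a = ∫ t, f t * a := (hconst a).symm
      _ ≤ ∫ t, f t * g (x - t) := integral_mono (hfc a) hfg fun t =>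
          mul_le_mul_of_nonneg_left (hab _).1 ((mollifier n).nonneg_normed t)
  · calc ∫ t, f t * g (x - t) ≤ ∫ t, f t * b := integral_mono hfg (hfc b) fun t =>
          mul_le_mul_of_nonneg_left (hab _).2 ((mollifier n).nonneg_normed t)
      _ = b := hconst b

lemma cutoff_eventually_eq_one {u : ℝ} (hu : u ∈ Ioo (-1 : ℝ) 1) :
    ∀ᶠ n in atTop, cutoff n u = 1 := by
  have hu' : |u| < 1 := abs_lt.2 hu
  filter_upwards [tendsto_approxScale.eventually (gt_mem_nhds (sub_pos.2 hu'))] with n hn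
  refine (cutoff n).one_of_mem_closedBall ?_
  rw [Metric.mem_closedBall, Real.dist_0_eq_abs]
  exact le_sub_comm.1 hn.le

lemma cutoff_eq_zero_of_one_le_abs {u : ℝ} (hu : 1 ≤ |u|) (n : ℕ) : cutoff n u = 0 :=
  (cutoff n).zero_of_le_dist (by rwa [Real.dist_0_eq_abs])

def approxProfile (a b : ℝ) (g : ℝ → ℝ) (n : ℕ) (u : ℝ) : ℝ :=
  cutoff n u * ((1 - approxScale n) * mollify n g u + approxScale n / 2)
    + (1 - cutoff n u) * (a + (b - a) * ((u + 1) / 2))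

variable {a b : ℝ}

lemma contDiff_approxProfile (hg : LocallyIntegrable g) (n : ℕ) :
    ContDiff ℝ ∞ (approxProfile a b g n) := by
  unfold approxProfile
  have := contDiff_mollify hg n
  have : ContDiff ℝ ∞ (cutoff n) := (cutoff n).contDiff
  fun_prop

lemma approxProfile_neg_one (n : ℕ) : approxProfile a b g n (-1) = a := by
  simp [approxProfile, cutoff_eq_zero_of_one_le_abs]

lemma approxProfile_one (n : ℕ) : approxProfile a b g n 1 = b := by
  simp [approxProfile, cutoff_eq_zero_of_one_le_abs]

lemma approxProfile_mem_Ioo (ha : a ∈ Ioo (0 : ℝ) 1) (hb : b ∈ Ioo (0 : ℝ) 1)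
    (hg : Measurable g) (hg01 : ∀ x, g x ∈ Icc (0 : ℝ) 1) (n : ℕ) {u : ℝ}
    (hu : u ∈ Icc (-1 : ℝ) 1) : approxProfile a b g n u ∈ Ioo (0 : ℝ) 1 := by
  have hm := mollify_mem_Icc hg hg01 n u
  have hθ := approxScale_pos n
  have hθ' := approxScale_le_half n
  have hsqueezed : (1 - approxScale n) * mollify n g u + approxScale n / 2 ∈ Ioo (0 : ℝ) 1 := by
    constructor <;> nlinarith [hm.1, hm.2]
  have hlin : a + (b - a) * ((u + 1) / 2) ∈ Ioo (0 : ℝ) 1 := by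
    convert convex_Ioo (0 : ℝ) 1 ha hb (a := 1 - (u + 1) / 2) (b := (u + 1) / 2)
      (by linarith [hu.2]) (by linarith [hu.1]) (by ring) using 1
    simp only [smul_eq_mul]
    ring
  exact convex_Ioo (0 : ℝ) 1 hsqueezed hlin (cutoff n).nonneg
    (by linarith [(cutoff n).le_one (x := u)]) (by ring)

lemma ae_tendsto_approxProfile (hg : LocallyIntegrable g) :
    ∀ᵐ u, u ∈ Ι (-1 : ℝ) 1 → Tendsto (fun n => approxProfile a b g n u) atTop (𝓝 (g u)) := by
  filter_upwards [ae_tendsto_mollify hg, Measure.ae_ne volume 1] with u hu hu1 huI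
  rw [uIoc_of_le (by norm_num)] at huI
  have hlim : Tendsto (fun n => (1 - approxScale n) * mollify n g u + approxScale n / 2)
      atTop (𝓝 (g u)) := by
    simpa using (((tendsto_const_nhds (x := (1 : ℝ))).sub tendsto_approxScale).mul hu).add
      (tendsto_approxScale.div_const 2)
  refine hlim.congr' ?_
  filter_upwards [cutoff_eventually_eq_one ⟨huI.1, lt_of_le_of_ne huI.2 hu1⟩] with n hn
  simp [approxProfile, hn]

end Approximation

section Profiles

variable {φm φp E A : ℝ} {φ d ρ ρ₁ ρ₂ : ℝ → ℝ}

lemma memF.continuousOn (hF : memF φm φp E φ d) : ContinuousOn φ (Icc (-1 : ℝ) 1) :=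
  fun u hu => (hF.1 u hu).continuousWithinAt

lemma memF.continuousOn_deriv (hF : memF φm φp E φ d) : ContinuousOn d (Icc (-1 : ℝ) 1) :=
  let ⟨_, hL⟩ := hF.2.1
  hL.continuousOn

lemma memF.deriv_pos (hF : memF φm φp E φ d) {u : ℝ} (hu : u ∈ Icc (-1 : ℝ) 1) : 0 < d u :=
  (le_max_left 0 E).trans_lt (hF.2.2.2.2 u hu)

lemma memF.lt_deriv (hF : memF φm φp E φ d) {u : ℝ} (hu : u ∈ Icc (-1 : ℝ) 1) : E < d u :=
  (le_max_right 0 E).trans_lt (hF.2.2.2.2 u hu)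

lemma memF.mem_Icc (hF : memF φm φp E φ d) {u : ℝ} (hu : u ∈ Icc (-1 : ℝ) 1) :
    φ u ∈ Icc φm φp := by
  have hmono : MonotoneOn φ (Icc (-1 : ℝ) 1) := by
    refine monotoneOn_of_hasDerivWithinAt_nonneg (convex_Icc _ _) hF.continuousOn
      (fun x hx => (hF.1 x (interior_subset hx)).mono interior_subset)
      (fun x hx => (hF.deriv_pos (interior_subset hx)).le)
  have hl : (-1 : ℝ) ∈ Icc (-1 : ℝ) 1 := by norm_num
  have hr : (1 : ℝ) ∈ Icc (-1 : ℝ) 1 := by norm_num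
  rw [← hF.2.2.1, ← hF.2.2.2.1]
  exact ⟨hmono hl hu hu.1, hmono hu hr hu.2⟩

lemma memF.abs_le_max (hF : memF φm φp E φ d) {u : ℝ} (hu : u ∈ Icc (-1 : ℝ) 1) :
    |φ u| ≤ max |φm| |φp| := by
  obtain ⟨h1, h2⟩ := hF.mem_Icc hu
  rw [abs_le]
  constructor
  · linarith [neg_abs_le φm, le_max_left |φm| |φp|]
  · linarith [le_abs_self φp, le_max_right |φm| |φp|]

lemma memF.integral_deriv (hF : memF φm φp E φ d) : ∫ u in (-1 : ℝ)..1, d u = φp - φm := by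
  rw [intervalIntegral.integral_eq_sub_of_hasDeriv_right_of_le (by norm_num) hF.continuousOn
    (fun x hx => ((hF.1 x (Ioo_subset_Icc_self hx)).hasDerivAt
      (Icc_mem_nhds hx.1 hx.2)).hasDerivWithinAt)
    (hF.continuousOn_deriv.intervalIntegrable_of_Icc (by norm_num)), hF.2.2.2.1, hF.2.2.1]

lemma memF_affine (hφ : φm < φp) (hE : E < (φp - φm) / 2) :
    memF φm φp E (fun u => (φp + φm) / 2 + (φp - φm) / 2 * u) (fun _ => (φp - φm) / 2) := by
  refine ⟨fun u _ => ?_, ⟨0, fun x _ y _ => by simp⟩, by ring, by ring,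
    fun u _ => max_lt (by linarith) hE⟩
  simpa using (((hasDerivAt_id u).const_mul ((φp - φm) / 2)).const_add
    ((φp + φm) / 2)).hasDerivWithinAt

lemma memM.intervalIntegrable_comp (hρ : memM ρ) {h : ℝ → ℝ} (hh : Continuous h) :
    IntervalIntegrable (fun u => h (ρ u)) volume (-1) 1 := by
  obtain ⟨C, hC⟩ := (isCompact_Icc (a := (0 : ℝ)) (b := 1)).exists_bound_of_continuousOn
    hh.continuousOn
  exact (intervalIntegrable_iff_integrableOn_Icc_of_le (by norm_num)).2
    (Measure.integrableOn_of_bounded (by simp) (hh.measurable.comp hρ.1).aestronglyMeasurable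
      (ae_restrict_of_forall_mem measurableSet_Icc fun u hu => hC _ (hρ.2 u hu)))

def slopeTerm (E x : ℝ) : ℝ :=
  if E = 0 then log x + 1 else E⁻¹ * (x * log x - (x - E) * log (x - E))

lemma continuousOn_slopeTerm (E : ℝ) : ContinuousOn (slopeTerm E) (Ioi 0) := by
  unfold slopeTerm
  split_ifs
  · exact (continuousOn_log.mono fun x hx => (ne_of_gt hx)).add continuousOn_const
  · exact (continuous_const.mul (continuous_mul_log.sub
      (continuous_mul_log.comp (continuous_id.sub continuous_const)))).continuousOn

lemma mul_log_sub_mul_log_le {x y : ℝ} (hx : 0 < x) (hy : 0 < y) :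
    x * log x - y * log y ≤ (x - y) * (log x + 1) := by
  have h := log_le_sub_one_of_pos (div_pos hx hy)
  rw [log_div hx.ne' hy.ne', le_sub_iff_add_le, div_eq_mul_inv] at h
  have := mul_le_mul_of_nonneg_left h hy.le
  rw [mul_add, mul_one, mul_comm x, ← mul_assoc, mul_inv_cancel₀ hy.ne', one_mul] at this
  nlinarith

lemma slopeTerm_le {x : ℝ} (hx : 0 < x) (hEx : E < x) : slopeTerm E x ≤ x + |E| := by
  unfold slopeTerm
  split_ifs with hE
  · linarith [log_le_sub_one_of_pos hx, abs_nonneg E]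
  rcases lt_or_gt_of_ne hE with hneg | hpos
  · have h := mul_log_sub_mul_log_le (sub_pos.2 hEx) hx
    have hlog := log_le_sub_one_of_pos (sub_pos.2 hEx)
    calc E⁻¹ * (x * log x - (x - E) * log (x - E))
        ≤ E⁻¹ * (E * (log (x - E) + 1)) :=
          mul_le_mul_of_nonpos_left (by linarith) (inv_nonpos.2 hneg.le)
      _ = log (x - E) + 1 := by field_simp
      _ ≤ x + |E| := by rw [abs_of_neg hneg]; linarith
  · have h := mul_log_sub_mul_log_le hx (sub_pos.2 hEx)
    calc E⁻¹ * (x * log x - (x - E) * log (x - E))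
        ≤ E⁻¹ * (E * (log x + 1)) :=
          mul_le_mul_of_nonneg_left (by simpa using h) (inv_nonneg.2 hpos.le)
      _ = log x + 1 := by field_simp
      _ ≤ x + |E| := by linarith [log_le_sub_one_of_pos hx, abs_nonneg E]

lemma mul_log_add_one_sub_mul_log (x : ℝ) :
    x * log x + (1 - x) * log (1 - x) = -binEntropy x := by
  simp only [binEntropy, log_inv]
  ring

lemma intervalIntegrable_entropyPart (hρ : memM ρ) (hF : memF φm φp E φ d) :
    IntervalIntegrable (fun u => -binEntropy (ρ u) + (1 - ρ u) * φ u) volume (-1) 1 :=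
  (hρ.intervalIntegrable_comp binEntropy_continuous).neg.add
    ((hρ.intervalIntegrable_comp (continuous_const.sub continuous_id)).mul_continuousOn
      (by rw [uIcc_of_le (by norm_num)]; exact hF.continuousOn))

lemma memF.continuousOn_potentialPart (hF : memF φm φp E φ d) :
    ContinuousOn (fun u => slopeTerm E (d u) - log (1 + exp (φ u)) - A) (Icc (-1 : ℝ) 1) :=
  (((continuousOn_slopeTerm E).comp hF.continuousOn_deriv fun _ hu => hF.deriv_pos hu).sub
    ((continuousOn_const.add (continuous_exp.comp_continuousOn hF.continuousOn)).log
      fun u _ => (add_pos one_pos (exp_pos (φ u))).ne')).sub continuousOn_const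

lemma GEint_eq_add (hρ : memM ρ) (hF : memF φm φp E φ d) :
    GEint E A ρ φ d = (∫ u in (-1 : ℝ)..1, (-binEntropy (ρ u) + (1 - ρ u) * φ u))
      + ∫ u in (-1 : ℝ)..1, (slopeTerm E (d u) - log (1 + exp (φ u)) - A) := by
  rw [← intervalIntegral.integral_add (intervalIntegrable_entropyPart hρ hF)
    (hF.continuousOn_potentialPart.intervalIntegrable_of_Icc (by norm_num))]
  unfold GEint slopeTerm
  congr 1
  ext u
  rw [mul_log_add_one_sub_mul_log]
  ring

lemma GEint_le (hρ : memM ρ) (hF : memF φm φp E φ d) :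
    GEint E A ρ φ d ≤ 2 * (max |φm| |φp| + |E| - A) + (φp - φm) := by
  have hentropy : ∫ u in (-1 : ℝ)..1, (-binEntropy (ρ u) + (1 - ρ u) * φ u)
      ≤ ∫ _ in (-1 : ℝ)..1, max |φm| |φp| := by
    refine intervalIntegral.integral_mono_on (by norm_num) (intervalIntegrable_entropyPart hρ hF)
      intervalIntegrable_const fun u hu => ?_
    obtain ⟨h0, h1⟩ := hρ.2 u hu
    have hφ : (1 - ρ u) * φ u ≤ |φ u| := by
      nlinarith [neg_abs_le (φ u), le_abs_self (φ u), abs_nonneg (φ u)]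
    linarith [binEntropy_nonneg h0 h1, hF.abs_le_max hu]
  have hpotential : ∫ u in (-1 : ℝ)..1, (slopeTerm E (d u) - log (1 + exp (φ u)) - A)
      ≤ ∫ u in (-1 : ℝ)..1, (d u + (|E| - A)) := by
    refine intervalIntegral.integral_mono_on (by norm_num)
      (hF.continuousOn_potentialPart.intervalIntegrable_of_Icc (by norm_num))
      ((hF.continuousOn_deriv.intervalIntegrable_of_Icc (by norm_num)).add
        intervalIntegrable_const) fun u hu => ?_
    have hlog : 0 ≤ log (1 + exp (φ u)) := log_nonneg (by linarith [exp_pos (φ u)])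
    linarith [slopeTerm_le (hF.deriv_pos hu) (hF.lt_deriv hu)]
  rw [intervalIntegral.integral_add (hF.continuousOn_deriv.intervalIntegrable_of_Icc
    (by norm_num)) intervalIntegrable_const, hF.integral_deriv] at hpotential
  simp only [intervalIntegral.integral_const, smul_eq_mul] at hentropy hpotential
  rw [GEint_eq_add hρ hF]
  norm_num at hentropy hpotential
  linarith

def profileDist (M : ℝ) (ρ₁ ρ₂ : ℝ → ℝ) : ℝ :=
  ∫ u in (-1 : ℝ)..1, (|binEntropy (ρ₁ u) - binEntropy (ρ₂ u)| + M * |ρ₁ u - ρ₂ u|)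

lemma profileDist_comm (M : ℝ) (ρ₁ ρ₂ : ℝ → ℝ) : profileDist M ρ₁ ρ₂ = profileDist M ρ₂ ρ₁ := by
  simp only [profileDist, abs_sub_comm (binEntropy (ρ₁ _)), abs_sub_comm (ρ₁ _)]

lemma GEint_le_GEint_add (hρ₁ : memM ρ₁) (hρ₂ : memM ρ₂) (hF : memF φm φp E φ d) :
    GEint E A ρ₁ φ d ≤ GEint E A ρ₂ φ d + profileDist (max |φm| |φp|) ρ₁ ρ₂ := by
  have hdist : IntervalIntegrable
      (fun u => |binEntropy (ρ₁ u) - binEntropy (ρ₂ u)| + max |φm| |φp| * |ρ₁ u - ρ₂ u|)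
      volume (-1) 1 :=
    ((hρ₁.intervalIntegrable_comp binEntropy_continuous).sub
      (hρ₂.intervalIntegrable_comp binEntropy_continuous)).abs.add
      (((hρ₁.intervalIntegrable_comp continuous_id).sub
        (hρ₂.intervalIntegrable_comp continuous_id)).abs.const_mul _)
  have key : (∫ u in (-1 : ℝ)..1, (-binEntropy (ρ₁ u) + (1 - ρ₁ u) * φ u))
      - ∫ u in (-1 : ℝ)..1, (-binEntropy (ρ₂ u) + (1 - ρ₂ u) * φ u)
      ≤ profileDist (max |φm| |φp|) ρ₁ ρ₂ := by
    rw [← intervalIntegral.integral_sub (intervalIntegrable_entropyPart hρ₁ hF)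
      (intervalIntegrable_entropyPart hρ₂ hF)]
    refine intervalIntegral.integral_mono_on (by norm_num)
      ((intervalIntegrable_entropyPart hρ₁ hF).sub (intervalIntegrable_entropyPart hρ₂ hF))
      hdist fun u hu => ?_
    have hH : binEntropy (ρ₂ u) - binEntropy (ρ₁ u) ≤ |binEntropy (ρ₁ u) - binEntropy (ρ₂ u)| :=
      abs_sub_comm (binEntropy (ρ₁ u)) _ ▸ le_abs_self _
    have hφ : (ρ₂ u - ρ₁ u) * φ u ≤ max |φm| |φp| * |ρ₁ u - ρ₂ u| :=
      calc (ρ₂ u - ρ₁ u) * φ u ≤ |(ρ₂ u - ρ₁ u) * φ u| := le_abs_self _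
        _ = |ρ₁ u - ρ₂ u| * |φ u| := by rw [abs_mul, abs_sub_comm]
        _ ≤ |ρ₁ u - ρ₂ u| * max |φm| |φp| :=
            mul_le_mul_of_nonneg_left (hF.abs_le_max hu) (abs_nonneg _)
        _ = _ := mul_comm _ _
    linarith
  rw [GEint_eq_add hρ₁ hF, GEint_eq_add hρ₂ hF]
  linarith

lemma csSup_le_csSup_add {s t : Set ℝ} {D : ℝ} (hs : s.Nonempty) (ht : BddAbove t)
    (h : ∀ x ∈ s, ∃ y ∈ t, x ≤ y + D) : sSup s ≤ sSup t + D :=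
  csSup_le hs fun x hx =>
    let ⟨_, hy, hxy⟩ := h x hx
    hxy.trans (by gcongr; exact le_csSup ht hy)

lemma SE_le_SE_add (hne : ∃ φ d, memF φm φp E φ d) (hρ₁ : memM ρ₁) (hρ₂ : memM ρ₂) :
    SE φm φp E A ρ₁ ≤ SE φm φp E A ρ₂ + profileDist (max |φm| |φp|) ρ₁ ρ₂ := by
  obtain ⟨φ₀, d₀, hF₀⟩ := hne
  refine csSup_le_csSup_add ⟨_, φ₀, d₀, hF₀, rfl⟩
    ⟨2 * (max |φm| |φp| + |E| - A) + (φp - φm), ?_⟩ ?_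
  · rintro _ ⟨φ, d, hF, rfl⟩
    exact GEint_le hρ₂ hF
  · rintro _ ⟨φ, d, hF, rfl⟩
    exact ⟨_, ⟨φ, d, hF, rfl⟩, GEint_le_GEint_add hρ₁ hρ₂ hF⟩

lemma abs_SE_sub_SE_le (hne : ∃ φ d, memF φm φp E φ d) (hρ₁ : memM ρ₁) (hρ₂ : memM ρ₂) :
    |SE φm φp E A ρ₁ - SE φm φp E A ρ₂| ≤ profileDist (max |φm| |φp|) ρ₁ ρ₂ := by
  rw [abs_sub_le_iff, profileDist_comm _ ρ₁]
  constructor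
  · linarith [SE_le_SE_add (A := A) hne hρ₁ hρ₂, profileDist_comm (max |φm| |φp|) ρ₁ ρ₂]
  · linarith [SE_le_SE_add (A := A) hne hρ₂ hρ₁]

end Profiles

section Convergence

variable {ρs : ℕ → ℝ → ℝ} {ρ : ℝ → ℝ}

lemma tendsto_intervalIntegral_of_bounded {a b C : ℝ} {F : ℕ → ℝ → ℝ} {f : ℝ → ℝ}
    (hF : ∀ n, AEStronglyMeasurable (F n) (volume.restrict (Ι a b)))
    (hC : ∀ n, ∀ u ∈ Ι a b, |F n u| ≤ C)
    (hlim : ∀ᵐ u, u ∈ Ι a b → Tendsto (fun n => F n u) atTop (𝓝 (f u))) :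
    Tendsto (fun n => ∫ u in a..b, F n u) atTop (𝓝 (∫ u in a..b, f u)) :=
  intervalIntegral.tendsto_integral_filter_of_dominated_convergence (fun _ => C)
    (Eventually.of_forall hF) (Eventually.of_forall fun n => Eventually.of_forall (hC n))
    intervalIntegrable_const hlim

lemma uIoc_neg_one_one_subset_Icc : Ι (-1 : ℝ) 1 ⊆ Icc (-1) 1 := by
  rw [uIoc_of_le (by norm_num)]
  exact Ioc_subset_Icc_self

lemma tendsto_profileDist (hρs : ∀ n, memM (ρs n)) (hρ : memM ρ)
    (hlim : ∀ᵐ u, u ∈ Ι (-1 : ℝ) 1 → Tendsto (fun n => ρs n u) atTop (𝓝 (ρ u))) (M : ℝ) :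
    Tendsto (fun n => profileDist M (ρs n) ρ) atTop (𝓝 0) := by
  have h := tendsto_intervalIntegral_of_bounded (f := fun _ => 0) (C := log 2 + |M|)
    (fun n => ((((binEntropy_continuous.measurable.comp (hρs n).1).sub
      (binEntropy_continuous.measurable.comp hρ.1)).abs).add
      (measurable_const.mul ((hρs n).1.sub hρ.1).abs)).aestronglyMeasurable)
    (fun n u hu => ?_)
    (hlim.mono fun u hu huI => by
      simpa using (((binEntropy_continuous.tendsto _).comp (hu huI)).sub_const
        (binEntropy (ρ u))).abs.add (((hu huI).sub_const (ρ u)).abs.const_mul M))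
  · simpa [profileDist] using h
  obtain ⟨h0, h1⟩ := (hρs n).2 u (uIoc_neg_one_one_subset_Icc hu)
  obtain ⟨h0', h1'⟩ := hρ.2 u (uIoc_neg_one_one_subset_Icc hu)
  have hH := abs_sub_le_of_nonneg_of_le (binEntropy_nonneg h0 h1) binEntropy_le_log_two
    (binEntropy_nonneg h0' h1') binEntropy_le_log_two
  have hρ' := abs_sub_le_of_nonneg_of_le h0 h1 h0' h1'
  calc |(|binEntropy (ρs n u) - binEntropy (ρ u)| + M * |ρs n u - ρ u|)|
      ≤ |(|binEntropy (ρs n u) - binEntropy (ρ u)|)| + |(M * |ρs n u - ρ u|)| :=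
        abs_add_le _ _
    _ = |binEntropy (ρs n u) - binEntropy (ρ u)| + |M| * |ρs n u - ρ u| := by
        rw [abs_abs, abs_mul, abs_abs]
    _ ≤ log 2 + |M| := by nlinarith [abs_nonneg M, abs_nonneg (ρs n u - ρ u)]

lemma tendsto_SE {φm φp E A : ℝ} (hne : ∃ φ d, memF φm φp E φ d) (hρs : ∀ n, memM (ρs n))
    (hρ : memM ρ)
    (hlim : ∀ᵐ u, u ∈ Ι (-1 : ℝ) 1 → Tendsto (fun n => ρs n u) atTop (𝓝 (ρ u))) :
    Tendsto (fun n => SE φm φp E A (ρs n)) atTop (𝓝 (SE φm φp E A ρ)) :=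
  tendsto_iff_norm_sub_tendsto_zero.2 <| squeeze_zero (fun _ => norm_nonneg _)
    (fun n => abs_SE_sub_SE_le hne (hρs n) hρ) (tendsto_profileDist hρs hρ hlim _)

lemma convM_of_ae_tendsto (hρs : ∀ n, memM (ρs n))
    (hlim : ∀ᵐ u, u ∈ Ι (-1 : ℝ) 1 → Tendsto (fun n => ρs n u) atTop (𝓝 (ρ u))) :
    convM ρs ρ := by
  intro G hG
  obtain ⟨C, hC⟩ := isCompact_Icc.exists_bound_of_continuousOn hG
  refine tendsto_intervalIntegral_of_bounded (C := C)
    (fun n => (hρs n).1.aestronglyMeasurable.mul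
      ((hG.mono uIoc_neg_one_one_subset_Icc).aestronglyMeasurable measurableSet_uIoc))
    (fun n u hu => ?_) (hlim.mono fun u hu huI => (hu huI).mul_const (G u))
  have hu' := uIoc_neg_one_one_subset_Icc hu
  obtain ⟨h0, h1⟩ := (hρs n).2 u hu'
  rw [abs_mul, abs_of_nonneg h0]
  exact (mul_le_of_le_one_left (abs_nonneg _) h1).trans (hC u hu')

end Convergence

lemma ContDiff.exists_hasDerivWithinAt_two {f : ℝ → ℝ} (hf : ContDiff ℝ 2 f) (s : Set ℝ) :
    ∃ d1 d2 : ℝ → ℝ, (∀ u ∈ s, HasDerivWithinAt f (d1 u) s u) ∧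
      (∀ u ∈ s, HasDerivWithinAt d1 (d2 u) s u) ∧ ContinuousOn d2 s := by
  obtain ⟨hf₁, -, hf'⟩ := (contDiff_succ_iff_deriv (n := 1)).1 (by rwa [one_add_one_eq_two])
  obtain ⟨hf₂, -, hf''⟩ := (contDiff_succ_iff_deriv (n := 0)).1 (by rwa [zero_add])
  exact ⟨deriv f, deriv (deriv f), fun u _ => (hf₁ u).hasDerivAt.hasDerivWithinAt,
    fun u _ => (hf₂ u).hasDerivAt.hasDerivWithinAt, hf''.continuous.continuousOn⟩

lemma log_div_one_sub_lt_log_div_one_sub {a b : ℝ} (ha : 0 < a) (hab : a < b) (hb : b < 1) :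
    log (a / (1 - a)) < log (b / (1 - b)) := by
  refine log_lt_log (div_pos ha (by linarith)) ?_
  rw [div_lt_div_iff₀ (by linarith) (by linarith)]
  nlinarith

theorem stmt11_general (ρm ρp φm φp E0 : ℝ)
    (h0 : 0 < ρm) (h1 : ρm < ρp) (h2 : ρp < 1)
    (hφm : φm = Real.log (ρm / (1 - ρm))) (hφp : φp = Real.log (ρp / (1 - ρp)))
    (hE0 : E0 = (φp - φm) / 2) (E A : ℝ) (hE : E < E0)
    (ρ : ℝ → ℝ) (hρ : memM ρ) :
    ∃ ρn : ℕ → ℝ → ℝ,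
      (∀ n, memM (ρn n)) ∧ convM ρn ρ ∧
      (∀ n, ∃ d1 d2 : ℝ → ℝ,
        (∀ u ∈ Set.Icc (-1:ℝ) 1, HasDerivWithinAt (ρn n) (d1 u) (Set.Icc (-1:ℝ) 1) u) ∧
        (∀ u ∈ Set.Icc (-1:ℝ) 1, HasDerivWithinAt d1 (d2 u) (Set.Icc (-1:ℝ) 1) u) ∧
        ContinuousOn d2 (Set.Icc (-1:ℝ) 1)) ∧
      (∀ n, ρn n (-1) = ρm ∧ ρn n 1 = ρp) ∧
      (∀ n, ∀ u ∈ Set.Icc (-1:ℝ) 1, 0 < ρn n u ∧ ρn n u < 1) ∧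
      Filter.Tendsto (fun n => SE φm φp E A (ρn n)) Filter.atTop
        (nhds (SE φm φp E A ρ)) := by
  have hφ : φm < φp := hφm ▸ hφp ▸ log_div_one_sub_lt_log_div_one_sub h0 h1 h2
  have hne : ∃ φ d, memF φm φp E φ d := ⟨_, _, memF_affine hφ (hE0 ▸ hE)⟩
  set g := (Icc (-1 : ℝ) 1).indicator ρ
  have hg : Measurable g := hρ.1.indicator measurableSet_Icc
  have hg01 : ∀ x, g x ∈ Icc (0 : ℝ) 1 := fun x => by
    by_cases hx : x ∈ Icc (-1 : ℝ) 1
    · simpa [g, hx] using hρ.2 x hx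
    · simp [g, hx]
  have hgI : LocallyIntegrable g := (locallyIntegrable_const (1 : ℝ)).mono
    hg.aestronglyMeasurable (Eventually.of_forall fun x => by
      simpa [abs_of_nonneg (hg01 x).1] using (hg01 x).2)
  have hlim : ∀ᵐ u, u ∈ Ι (-1 : ℝ) 1 →
      Tendsto (fun n => approxProfile ρm ρp g n u) atTop (𝓝 (ρ u)) :=
    (ae_tendsto_approxProfile hgI).mono fun u hu huI => by
      simpa [g, uIoc_neg_one_one_subset_Icc huI] using hu huI
  have hIoo : ∀ n, ∀ u ∈ Icc (-1 : ℝ) 1, approxProfile ρm ρp g n u ∈ Ioo 0 1 := fun n _ hu =>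
    approxProfile_mem_Ioo ⟨h0, h1.trans h2⟩ ⟨h0.trans h1, h2⟩ hg hg01 n hu
  have hmem : ∀ n, memM (approxProfile ρm ρp g n) := fun n =>
    ⟨(contDiff_approxProfile hgI n).continuous.measurable,
      fun u hu => Ioo_subset_Icc_self (hIoo n u hu)⟩
  exact ⟨approxProfile ρm ρp g, hmem, convM_of_ae_tendsto hmem hlim,
    fun n => ((contDiff_approxProfile hgI n).of_le (by norm_cast)).exists_hasDerivWithinAt_two _,
    fun n => ⟨approxProfile_neg_one n, approxProfile_one n⟩, hIoo,
    tendsto_SE hne hmem hρ hlim⟩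

/-- Density of nice profiles: every `ρ ∈ 𝓜` is the limit in `𝓜` of a sequence of `C²`
profiles `ρⁿ` with `ρⁿ(±1) = ρ±`, `0 < ρⁿ < 1`, and `S_E(ρⁿ) → S_E(ρ)`. -/
theorem stmt11 (ρm ρp φm φp E0 : ℝ)
    (h0 : 0 < ρm) (h1 : ρm < ρp) (h2 : ρp < 1)
    (hφm : φm = Real.log (ρm / (1 - ρm))) (hφp : φp = Real.log (ρp / (1 - ρp)))
    (hE0 : E0 = (φp - φm) / 2) (E J A : ℝ) (hE : E < E0)
    (hJneg : J ≤ 0) (hJeq : (1/2) * (∫ r in ρm..ρp, (E * chi r - J)⁻¹) = 1)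
    (hA : A = if E = 0 then Real.log ((ρp - ρm) / 2) + 1
      else Real.log (-J) + (1/2) * ∫ r in ρm..ρp, (E * chi r)⁻¹ * Real.log (1 - E * chi r / J))
    (ρ : ℝ → ℝ) (hρ : memM ρ) :
    ∃ ρn : ℕ → ℝ → ℝ,
      (∀ n, memM (ρn n)) ∧ convM ρn ρ ∧
      (∀ n, ∃ d1 d2 : ℝ → ℝ,
        (∀ u ∈ Set.Icc (-1:ℝ) 1, HasDerivWithinAt (ρn n) (d1 u) (Set.Icc (-1:ℝ) 1) u) ∧
        (∀ u ∈ Set.Icc (-1:ℝ) 1, HasDerivWithinAt d1 (d2 u) (Set.Icc (-1:ℝ) 1) u) ∧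
        ContinuousOn d2 (Set.Icc (-1:ℝ) 1)) ∧
      (∀ n, ρn n (-1) = ρm ∧ ρn n 1 = ρp) ∧
      (∀ n, ∀ u ∈ Set.Icc (-1:ℝ) 1, 0 < ρn n u ∧ ρn n u < 1) ∧
      Filter.Tendsto (fun n => SE φm φp E A (ρn n)) Filter.atTop
        (nhds (SE φm φp E A ρ)) :=
  stmt11_general ρm ρp φm φp E0 h0 h1 h2 hφm hφp hE0 E A hE ρ hρ
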